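/- Let N ≥ 2 be an integer and c, x real numbers. Then (x/2)^{N-1} · ∑_{p=0}^∞ (-1)^p c^p (x/2)^{2p} / (p!)^2 = ∑_{n=0}^∞ (2n+N-1) · [ ∑_{p=0}^n (-1)^p c^p/(p!)^2 · (p+n+N-2)!/(n-p)! ] · J_{2n+N-1}(x), where both series converge absolutely. -/

import Mathlib

/-- Bessel function of the first kind of nonnegative integer order. -/
noncomputable def besselJ (ν : ℕ) (x : ℝ) : ℝ :=
  ∑' p : ℕ, (-1 : ℝ) ^ p / ((Nat.factorial p : ℝ) * (Nat.factorial (p + ν) : ℝ)) *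
    (x / 2) ^ (2 * p + ν)

/-!
Expanding every `J_{2n+ν}(x)` in its power series, the double series
`∑ₙ ∑ₘ aₙ (-1)^m / (m! (m+2n+ν)!) (x/2)^(2m+2n+ν)` converges absolutely because
`|aₙ| / (2n+ν)! ≤ (1+|c|)^n / n!`. Regrouping it along `k = m + n` gives a power series in `x/2`
whose `k`-th coefficient is `∑_{n ≤ k} aₙ (-1)^(k-n) / ((k-n)! (k+n+ν)!)`. Exchanging the two finite
sums in it leaves the kernel sums `∑ⱼ (-1)^(M-j) (2j+γ+1) (j+γ)! / (j! (M-j)! (j+M+γ+1)!)`, which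
telescope to `δ_{M,0}`; so this coefficient is `(-1)^k c^k / (k!)^2`, the coefficient on the left.
-/

open Finset
open scoped Nat

lemma neg_one_pow_sub_eq {R : Type*} [Monoid R] [HasDistribNeg R] {M j : ℕ} (h : j ≤ M) :
    (-1 : R) ^ (M - j) = (-1) ^ M * (-1) ^ j := by
  obtain ⟨i, rfl⟩ := Nat.exists_eq_add_of_le h
  rw [Nat.add_sub_cancel_left, pow_add, (Commute.neg_one_left _).pow_pow, mul_assoc, ← pow_add,
    Even.neg_one_pow ⟨j, rfl⟩, mul_one]

lemma neumannKernel_telescope_step (β i j : ℕ) :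
    ((j + i : ℕ) : ℝ) * ((-1) ^ j * (2 * j + β + 1) * (j + β)! / (j ! * i ! * (2 * j + i + β + 1)!))
      = (-1) ^ j * j * (i + 1) * (j + β)! / (j ! * (i + 1)! * (2 * j + i + β)!)
        - (-1) ^ (j + 1) * (j + 1) * i * (j + β + 1)! /
          ((j + 1)! * i ! * (2 * j + i + β + 1)!) := by
  simp only [Nat.factorial_succ]
  push_cast
  field_simp
  ring

lemma sum_neumannKernel_eq_zero (β M : ℕ) (hM : M ≠ 0) :
    ∑ j ∈ range (M + 1),
      (-1 : ℝ) ^ j * (2 * j + β + 1) * (j + β)! / (j ! * (M - j)! * (j + M + β + 1)!) = 0 := by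
  -- For `1 ≤ j ≤ M`, `g j = (-1)^j (j+β)! / ((j-1)! (M-j)! (j+M+β)!)`; the factors `j` and
  -- `M + 1 - j` make it vanish at `j = 0` and `j = M + 1`.
  set g : ℕ → ℝ := fun j =>
    (-1) ^ j * j * (M + 1 - j : ℕ) * (j + β)! / (j ! * (M + 1 - j)! * (j + M + β)!)
  have hstep : ∀ j ∈ range (M + 1),
      (M : ℝ) * ((-1) ^ j * (2 * j + β + 1) * (j + β)! / (j ! * (M - j)! * (j + M + β + 1)!))
        = g j - g (j + 1) := by
    intro j hj
    obtain ⟨i, rfl⟩ := Nat.exists_eq_add_of_le (Nat.lt_succ_iff.mp (mem_range.mp hj))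
    simp only [g, show j + i + 1 - j = i + 1 by omega, show j + i + 1 - (j + 1) = i by omega,
      show j + i - j = i by omega, show j + 1 + (j + i) + β = 2 * j + i + β + 1 by omega,
      show j + (j + i) + β = 2 * j + i + β by omega, show j + 1 + β = j + β + 1 by omega]
    convert neumannKernel_telescope_step β i j using 2 <;> push_cast <;> ring
  apply mul_right_injective₀ (Nat.cast_ne_zero.mpr hM : (M : ℝ) ≠ 0)
  dsimp only
  rw [mul_zero, mul_sum, sum_congr rfl hstep, sum_range_sub']
  simp [g]

lemma sum_neumannKernel (γ M : ℕ) :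
    ∑ j ∈ range (M + 1),
      (-1 : ℝ) ^ (M - j) * (2 * j + γ + 1) * (j + γ)! / (j ! * (M - j)! * (j + M + γ + 1)!)
      = if M = 0 then 1 else 0 := by
  rcases eq_or_ne M 0 with rfl | hM
  · simp [Nat.factorial_succ, Nat.factorial_ne_zero]
    positivity
  · rw [if_neg hM, ← mul_zero ((-1 : ℝ) ^ M), ← sum_neumannKernel_eq_zero γ M hM, mul_sum]
    refine sum_congr rfl fun j hj => ?_
    rw [neg_one_pow_sub_eq (Nat.lt_succ_iff.mp (mem_range.mp hj))]
    ring

-- The coefficient of `J_{2n+β+1}(x)` in the expansion of `∑ₖ d k (x/2)^(2k+β+1)`; for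
-- `d p = (-1)^p c^p / (p!)^2` and `β = N - 2` it is the coefficient in the theorem.
noncomputable def neumannCoeff (d : ℕ → ℝ) (β n : ℕ) : ℝ :=
  (2 * n + β + 1) * ∑ p ∈ range (n + 1), d p * (p + n + β)! / (n - p)!

theorem sum_neumannCoeff_mul (d : ℕ → ℝ) (β k : ℕ) :
    ∑ n ∈ range (k + 1), neumannCoeff d β n * ((-1) ^ (k - n) / ((k - n)! * (k + n + β + 1)!))
      = d k := by
  have hinner : ∀ p ∈ range (k + 1), ∑ n ∈ Ico p (k + 1), (2 * n + β + 1 : ℝ) *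
      (d p * (p + n + β)! / (n - p)!) * ((-1) ^ (k - n) / ((k - n)! * (k + n + β + 1)!))
      = if p = k then d k else 0 := by
    intro p hp
    obtain ⟨M, rfl⟩ := Nat.exists_eq_add_of_le (Nat.lt_succ_iff.mp (mem_range.mp hp))
    rw [sum_Ico_eq_sum_range, show p + M + 1 - p = M + 1 by omega]
    calc _ = d p * ∑ j ∈ range (M + 1), (-1 : ℝ) ^ (M - j) * (2 * j + ((2 * p + β : ℕ) : ℝ) + 1) *
          (j + (2 * p + β))! / (j ! * (M - j)! * (j + M + (2 * p + β) + 1)!) := by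
          rw [mul_sum]
          refine sum_congr rfl fun j hj => ?_
          have hjM : j ≤ M := Nat.lt_succ_iff.mp (mem_range.mp hj)
          rw [show p + (p + j) + β = j + (2 * p + β) by omega, Nat.add_sub_cancel_left,
            show p + M - (p + j) = M - j by omega,
            show p + M + (p + j) + β + 1 = j + M + (2 * p + β) + 1 by omega]
          push_cast
          ring
      _ = _ := by
          rw [sum_neumannKernel]
          by_cases hM : M = 0 <;> simp [hM]
  calc _ = ∑ n ∈ range (k + 1), ∑ p ∈ range (n + 1), (2 * n + β + 1 : ℝ) *
        (d p * (p + n + β)! / (n - p)!) * ((-1) ^ (k - n) / ((k - n)! * (k + n + β + 1)!)) := by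
        simp only [neumannCoeff, mul_sum, sum_mul]
    _ = ∑ p ∈ range (k + 1), ∑ n ∈ Ico p (k + 1), (2 * n + β + 1 : ℝ) *
        (d p * (p + n + β)! / (n - p)!) * ((-1) ^ (k - n) / ((k - n)! * (k + n + β + 1)!)) := by
        simp only [range_eq_Ico]
        rw [sum_Ico_Ico_comm]
    _ = d k := by rw [sum_congr rfl hinner, sum_ite_eq']; simp

lemma neumannCoeff_div_factorial (d : ℕ → ℝ) (β n : ℕ) :
    neumannCoeff d β n / (2 * n + β + 1)!
      = (∑ p ∈ range (n + 1), d p * (p + n + β)! / (n - p)!) / (2 * n + β)! := by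
  rw [neumannCoeff, Nat.factorial_succ]
  push_cast
  field_simp

lemma abs_neumannCoeff_div_factorial_le {d : ℕ → ℝ} {C : ℝ} (hd : ∀ p, |d p| ≤ C ^ p / p !)
    (β n : ℕ) : |neumannCoeff d β n| / (2 * n + β + 1)! ≤ (1 + C) ^ n / n ! := by
  rw [← abs_of_pos (Nat.cast_pos.mpr (2 * n + β + 1).factorial_pos : (0 : ℝ) < _), ← abs_div,
    neumannCoeff_div_factorial, abs_div, Nat.abs_cast]
  calc |∑ p ∈ range (n + 1), d p * (p + n + β)! / (n - p)!| / (2 * n + β)!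
      ≤ (∑ p ∈ range (n + 1), |d p| * (p + n + β)! / (n - p)!) / (2 * n + β)! := by
        gcongr
        refine (abs_sum_le_sum_abs _ _).trans_eq (sum_congr rfl fun p _ => ?_)
        simp [abs_div, abs_mul]
    _ = ∑ p ∈ range (n + 1), |d p| / (n - p)! * ((p + n + β)! / (2 * n + β)! : ℝ) := by
        rw [sum_div]
        exact sum_congr rfl fun p _ => by ring
    _ ≤ ∑ p ∈ range (n + 1), C ^ p / p ! / (n - p)! := by
        refine sum_le_sum fun p hp => ?_
        have hfac : ((p + n + β)! : ℝ) ≤ (2 * n + β)! := by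
          gcongr
          have := mem_range.mp hp
          omega
        calc |d p| / (n - p)! * ((p + n + β)! / (2 * n + β)! : ℝ) ≤ |d p| / (n - p)! * 1 := by
              gcongr
              exact div_le_one_of_le₀ hfac (by positivity)
          _ ≤ C ^ p / p ! / (n - p)! := by
              rw [mul_one]
              gcongr
              exact hd p
    _ = (1 + C) ^ n / n ! := by
        rw [add_comm 1 C, add_pow, sum_div]
        refine sum_congr rfl fun p hp => ?_
        rw [one_pow, mul_one, Nat.cast_choose ℝ (Nat.lt_succ_iff.mp (mem_range.mp hp))]
        field_simp

lemma summable_neumannCoeff_majorant {d : ℕ → ℝ} {C : ℝ} (hd : ∀ p, |d p| ≤ C ^ p / p !)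
    (β : ℕ) (x : ℝ) :
    Summable fun n => |neumannCoeff d β n| * |x / 2| ^ (2 * n + (β + 1)) / (2 * n + (β + 1))! := by
  refine ((Real.summable_pow_div_factorial ((1 + C) * (x / 2) ^ 2)).mul_left
    (|x / 2| ^ (β + 1))).of_nonneg_of_le (fun n => by positivity) fun n => ?_
  have hpow : |x / 2| ^ (2 * n + (β + 1)) = |x / 2| ^ (β + 1) * ((x / 2) ^ 2) ^ n := by
    rw [← sq_abs, ← pow_mul, ← pow_add, add_comm]
  calc |neumannCoeff d β n| * |x / 2| ^ (2 * n + (β + 1)) / (2 * n + (β + 1))!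
      = |neumannCoeff d β n| / (2 * n + β + 1)! * |x / 2| ^ (2 * n + (β + 1)) :=
        mul_div_right_comm _ _ _
    _ ≤ (1 + C) ^ n / n ! * |x / 2| ^ (2 * n + (β + 1)) :=
        mul_le_mul_of_nonneg_right (abs_neumannCoeff_div_factorial_le hd β n) (by positivity)
    _ = |x / 2| ^ (β + 1) * (((1 + C) * (x / 2) ^ 2) ^ n / n !) := by rw [hpow, mul_pow]; ring

noncomputable def besselTerm (ν : ℕ) (x : ℝ) (m : ℕ) : ℝ :=
  (-1) ^ m / (m ! * (m + ν)!) * (x / 2) ^ (2 * m + ν)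

lemma besselJ_eq_tsum_besselTerm (ν : ℕ) (x : ℝ) : besselJ ν x = ∑' m, besselTerm ν x m := rfl

lemma abs_besselTerm_le (ν : ℕ) (x : ℝ) (m : ℕ) :
    |besselTerm ν x m| ≤ |x / 2| ^ ν / ν ! * (((x / 2) ^ 2) ^ m / m !) := by
  have hfac : (ν ! : ℝ) ≤ (m + ν)! := by exact_mod_cast Nat.factorial_le (Nat.le_add_left ν m)
  rw [besselTerm, abs_mul, abs_div, abs_neg_one_pow, abs_pow, pow_add, pow_mul, sq_abs, abs_mul,
    Nat.abs_cast, Nat.abs_cast]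
  calc 1 / (m ! * (m + ν)! : ℝ) * (((x / 2) ^ 2) ^ m * |x / 2| ^ ν)
      ≤ 1 / (m ! * ν ! : ℝ) * (((x / 2) ^ 2) ^ m * |x / 2| ^ ν) := by gcongr
    _ = |x / 2| ^ ν / ν ! * (((x / 2) ^ 2) ^ m / m !) := by ring

lemma abs_besselJ_le (ν : ℕ) (x : ℝ) :
    |besselJ ν x| ≤ |x / 2| ^ ν / ν ! * Real.exp ((x / 2) ^ 2) := by
  have hexp : HasSum (fun m => ((x / 2) ^ 2) ^ m / m !) (Real.exp ((x / 2) ^ 2)) := by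
    rw [Real.exp_eq_exp_ℝ]
    exact NormedSpace.expSeries_div_hasSum_exp _
  rw [besselJ_eq_tsum_besselTerm]
  exact tsum_of_norm_bounded (f := besselTerm ν x) (hexp.mul_left _) (abs_besselTerm_le ν x)

theorem Summable.tsum_eq_tsum_sum_antidiagonal {A α : Type*} [AddCommMonoid A] [HasAntidiagonal A]
    [AddCommMonoid α] [TopologicalSpace α] [ContinuousAdd α] [T3Space α] {f : A × A → α}
    (hf : Summable f) : ∑' q, f q = ∑' n, ∑ q ∈ antidiagonal n, f q := by
  conv_rhs => congr; ext; rw [← sum_finset_coe, ← tsum_fintype (L := .unconditional _)]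
  rw [← HasAntidiagonal.sigmaAntidiagonalEquivProd.tsum_eq f]
  exact (HasAntidiagonal.sigmaAntidiagonalEquivProd.summable_iff.mpr hf).tsum_sigma'
    fun n => (hasSum_fintype _).summable

section NeumannSeries

variable {a : ℕ → ℝ} {ν : ℕ} {x : ℝ}

lemma summable_abs_mul_besselJ
    (ha : Summable fun n => |a n| * |x / 2| ^ (2 * n + ν) / (2 * n + ν)!) :
    Summable fun n => |a n * besselJ (2 * n + ν) x| := by
  refine (ha.mul_right (Real.exp ((x / 2) ^ 2))).of_nonneg_of_le (fun _ => abs_nonneg _)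
    fun n => ?_
  calc |a n * besselJ (2 * n + ν) x|
      ≤ |a n| * (|x / 2| ^ (2 * n + ν) / (2 * n + ν)! * Real.exp ((x / 2) ^ 2)) := by
        rw [abs_mul]
        gcongr
        exact abs_besselJ_le _ x
    _ = _ := by ring

lemma summable_mul_besselTerm
    (ha : Summable fun n => |a n| * |x / 2| ^ (2 * n + ν) / (2 * n + ν)!) :
    Summable fun q : ℕ × ℕ => a q.1 * besselTerm (2 * q.1 + ν) x q.2 := by
  refine .of_norm_bounded (ha.mul_of_nonneg (Real.summable_pow_div_factorial ((x / 2) ^ 2))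
    (fun _ => by positivity) fun _ => by positivity) fun ⟨n, m⟩ => ?_
  calc ‖a n * besselTerm (2 * n + ν) x m‖
      ≤ |a n| * (|x / 2| ^ (2 * n + ν) / (2 * n + ν)! * (((x / 2) ^ 2) ^ m / m !)) := by
        rw [Real.norm_eq_abs, abs_mul]
        gcongr
        exact abs_besselTerm_le _ x m
    _ = _ := by ring

theorem tsum_mul_besselJ
    (ha : Summable fun n => |a n| * |x / 2| ^ (2 * n + ν) / (2 * n + ν)!) :
    ∑' n, a n * besselJ (2 * n + ν) x
      = ∑' k, (∑ n ∈ range (k + 1), a n * ((-1) ^ (k - n) / ((k - n)! * (k + n + ν)!))) *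
          (x / 2) ^ (2 * k + ν) := by
  have hF := summable_mul_besselTerm ha
  have hdiag : ∀ k, ∑ q ∈ antidiagonal k, a q.1 * besselTerm (2 * q.1 + ν) x q.2
      = (∑ n ∈ range (k + 1), a n * ((-1) ^ (k - n) / ((k - n)! * (k + n + ν)!))) *
          (x / 2) ^ (2 * k + ν) := by
    intro k
    rw [Nat.sum_antidiagonal_eq_sum_range_succ_mk, sum_mul]
    refine sum_congr rfl fun n hn => ?_
    have hnk : n ≤ k := Nat.lt_succ_iff.mp (mem_range.mp hn)
    rw [besselTerm, show k - n + (2 * n + ν) = k + n + ν by omega,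
      show 2 * (k - n) + (2 * n + ν) = 2 * k + ν by omega]
    ring
  calc ∑' n, a n * besselJ (2 * n + ν) x
      = ∑' n, ∑' m, a n * besselTerm (2 * n + ν) x m :=
        tsum_congr fun n => by rw [besselJ_eq_tsum_besselTerm, tsum_mul_left]
    _ = ∑' q : ℕ × ℕ, a q.1 * besselTerm (2 * q.1 + ν) x q.2 := hF.tsum_prod.symm
    _ = _ := by rw [hF.tsum_eq_tsum_sum_antidiagonal]; exact tsum_congr hdiag

end NeumannSeries

lemma summable_abs_mul_pow {d : ℕ → ℝ} {C : ℝ} (hd : ∀ p, |d p| ≤ C ^ p / p !) (y : ℝ) :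
    Summable fun p => |d p * y ^ p| := by
  refine (Real.summable_pow_div_factorial (C * |y|)).of_nonneg_of_le (fun _ => abs_nonneg _)
    fun p => ?_
  rw [abs_mul, abs_pow, mul_pow, mul_div_right_comm]
  exact mul_le_mul_of_nonneg_right (hd p) (by positivity)

/-- Neumann-type expansion: `(x/2)^{N-1} J_0(√c x)` expanded as an absolutely convergent
series of Bessel functions `J_{2n+N-1}(x)`. -/
theorem stmt_1 (N : ℕ) (hN : 2 ≤ N) (c x : ℝ) :
    Summable (fun p : ℕ =>
      |(-1 : ℝ) ^ p * c ^ p * (x / 2) ^ (2 * p) / (Nat.factorial p : ℝ) ^ 2|) ∧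
    Summable (fun n : ℕ =>
      |((2 * n + N : ℝ) - 1) *
        (∑ p ∈ Finset.range (n + 1), (-1 : ℝ) ^ p * c ^ p / (Nat.factorial p : ℝ) ^ 2 *
          (Nat.factorial (p + n + N - 2) : ℝ) / (Nat.factorial (n - p) : ℝ)) *
        besselJ (2 * n + N - 1) x|) ∧
    (x / 2) ^ (N - 1) *
        ∑' p : ℕ, (-1 : ℝ) ^ p * c ^ p * (x / 2) ^ (2 * p) / (Nat.factorial p : ℝ) ^ 2 =
      ∑' n : ℕ, ((2 * n + N : ℝ) - 1) *
        (∑ p ∈ Finset.range (n + 1), (-1 : ℝ) ^ p * c ^ p / (Nat.factorial p : ℝ) ^ 2 *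
          (Nat.factorial (p + n + N - 2) : ℝ) / (Nat.factorial (n - p) : ℝ)) *
        besselJ (2 * n + N - 1) x := by
  obtain ⟨β, rfl⟩ : ∃ β, N = β + 2 := ⟨N - 2, by omega⟩
  set d : ℕ → ℝ := fun p => (-1) ^ p * c ^ p / (p ! : ℝ) ^ 2
  have hd : ∀ p, |d p| ≤ |c| ^ p / p ! := fun p => by
    rw [abs_div, abs_mul, abs_neg_one_pow, abs_pow, one_mul, abs_pow, Nat.abs_cast, sq]
    exact div_le_div_of_nonneg_left (by positivity) (by positivity)
      (le_mul_of_one_le_left (by positivity) (by exact_mod_cast p.factorial_pos))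
  have hcoeff : ∀ n : ℕ, ((2 * n + ((β + 2 : ℕ) : ℝ)) - 1) * ∑ p ∈ range (n + 1),
      (-1 : ℝ) ^ p * c ^ p / (p ! : ℝ) ^ 2 * ((p + n + (β + 2) - 2)! : ℝ) / ((n - p)! : ℝ)
      = neumannCoeff d β n := fun n => by
    rw [neumannCoeff]
    congr 1
    push_cast
    ring
  have hlhs : ∀ p, (-1 : ℝ) ^ p * c ^ p * (x / 2) ^ (2 * p) / (p ! : ℝ) ^ 2
      = d p * ((x / 2) ^ 2) ^ p := fun p => by rw [← pow_mul]; ring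
  have ha := summable_neumannCoeff_majorant hd β x
  simp only [hcoeff, hlhs, show ∀ n, 2 * n + (β + 2) - 1 = 2 * n + (β + 1) from fun _ => rfl,
    show β + 2 - 1 = β + 1 from rfl]
  refine ⟨summable_abs_mul_pow hd _, summable_abs_mul_besselJ ha, ?_⟩
  rw [tsum_mul_besselJ ha, ← tsum_mul_left]
  simp only [← add_assoc, sum_neumannCoeff_mul]
  exact tsum_congr fun k => by rw [← pow_mul]; ring
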